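/- arXiv:1210.4654 — 3 statements merged into one kernel-verified Lean document; each statement's English description precedes it below -/
import Mathlib

section
/- Sensitivity-analysis identity for the counterfactual conditional mean (key lemma of Section 8): under consistency and exposure ignorability, for every m ∈ 𝒮 and x with P(X=x) > 0, E(Y_{1,m} | E=0, M=m, X=x) = E(Y | E=1, M=m, X=x) − t(1,m,x)·(1 − P(M=m|E=1,X=x)) + t(0,m,x)·(1 − P(M=m|E=0,X=x)), where the selection-bias function is t(e,m,x) := E(Y_{1,m} | E=e, M=m, X=x) − E(Y_{1,m} | E=e, M≠m, X=x). -/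
/-!
Condition on `X = x` throughout. By the law of total expectation over `{M = m}` and `{M ≠ m}`,
`E(Y_{1,m} | E=e, M=m, X=x) - t(e,m,x) · (1 - P(M=m | E=e, X=x)) = E(Y_{1,m} | E=e, X=x)`
for both exposure levels `e`, and by exposure ignorability the right-hand side does not depend
on `e`. Equating the two cases and replacing `Y_{1,m}` by `Y` on `{E=1, M=m}` (consistency)
gives the identity.
-/

open MeasureTheory ProbabilityTheory

/-- Conditional probability of `B` given the event `A`: `P(B ∩ A) / P(A)`. -/
noncomputable def cP {Ω : Type*} [MeasurableSpace Ω] (μ : Measure Ω) (B A : Set Ω) : ℝ :=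
  (μ (B ∩ A)).toReal / (μ A).toReal

/-- Conditional expectation of `Y` given the event `A`: `E[Y·1_A] / P(A)`. -/
noncomputable def cE {Ω : Type*} [MeasurableSpace Ω] (μ : Measure Ω) (Y : Ω → ℝ) (A : Set Ω) : ℝ :=
  (∫ ω in A, Y ω ∂μ) / (μ A).toReal

namespace SensitivityAnalysis

variable {Ω : Type*} [MeasurableSpace Ω] {μ : Measure Ω} {f : Ω → ℝ} {A S : Set Ω}

lemma cE_eq_integral_cond : cE μ f A = ∫ ω, f ω ∂μ[|A] := by
  rw [cE, ProbabilityTheory.cond, integral_smul_measure, ENNReal.toReal_inv, smul_eq_mul,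
    div_eq_inv_mul]

lemma cE_congr_ae {g : Ω → ℝ} (hA : MeasurableSet A) (h : ∀ᵐ ω ∂μ, ω ∈ A → f ω = g ω) :
    cE μ f A = cE μ g A := by
  rw [cE, cE, setIntegral_congr_ae hA h]

lemma toReal_div_mul_cE [IsFiniteMeasure μ] (f : Ω → ℝ) (T A : Set Ω) :
    (μ T).toReal / (μ A).toReal * cE μ f T = (∫ ω in T, f ω ∂μ) / (μ A).toReal := by
  by_cases hT : μ T = 0
  · simp [setIntegral_measure_zero f hT, hT]
  · have : (μ T).toReal ≠ 0 := ENNReal.toReal_ne_zero.2 ⟨hT, measure_ne_top μ T⟩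
    rw [cE]
    field_simp

lemma cE_eq_cP_mul_cE_inter_add [IsFiniteMeasure μ] (hS : MeasurableSet S)
    (hf : IntegrableOn f A μ) :
    cE μ f A = cP μ S A * cE μ f (A ∩ S) + (1 - cP μ S A) * cE μ f (A \ S) := by
  have hcP : cP μ S A = (μ (A ∩ S)).toReal / (μ A).toReal := by rw [cP, Set.inter_comm]
  by_cases hA : μ A = 0
  · have hdiff : μ (A \ S) = 0 := measure_mono_null Set.sdiff_subset hA
    simp [hcP, hA, cE, hdiff]
  · have hcompl : 1 - cP μ S A = (μ (A \ S)).toReal / (μ A).toReal := by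
      have : (μ A).toReal ≠ 0 := ENNReal.toReal_ne_zero.2 ⟨hA, measure_ne_top μ A⟩
      have hsum : (μ (A ∩ S)).toReal + (μ (A \ S)).toReal = (μ A).toReal :=
        measureReal_inter_add_sdiff hS
      rw [hcP, eq_div_iff this, sub_mul, div_mul_cancel₀ _ this]
      linarith
    rw [hcompl, hcP, toReal_div_mul_cE, toReal_div_mul_cE, ← add_div,
      integral_inter_add_sdiff hS hf, cE]

lemma integral_cond_preimage_eq_of_indepFun {β : Type*} [MeasurableSpace β] {ν : Measure Ω}
    [IsFiniteMeasure ν] {g : Ω → β} {B : Set β} (hfg : IndepFun f g ν) (hf : AEMeasurable f ν)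
    (hg : Measurable g) (hB : MeasurableSet B) (hν : ν (g ⁻¹' B) ≠ 0) :
    ∫ ω, f ω ∂ν[|g ⁻¹' B] = ∫ ω, f ω ∂ν := by
  have hsplit : ∫ ω in g ⁻¹' B, f ω ∂ν = ν.real (g ⁻¹' B) * ∫ ω, f ω ∂ν :=
    Indep.setIntegral_eq_mul (f := id) hg.comap_le ((IndepFun_iff_Indep _ _ _).1 hfg.symm) hf
      ⟨B, hB, rfl⟩ aestronglyMeasurable_id
  rw [ProbabilityTheory.cond, integral_smul_measure, hsplit, ENNReal.toReal_inv, smul_eq_mul,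
    ← measureReal_def, inv_mul_cancel_left₀]
  exact (measureReal_ne_zero_iff (measure_ne_top ν _)).2 hν

lemma cE_preimage_inter_eq_cE_of_indepFun [IsFiniteMeasure μ] {β : Type*} [MeasurableSpace β]
    {g : Ω → β} {B : Set β} {s : Set Ω} (hs : MeasurableSet s) (hfg : IndepFun f g μ[|s])
    (hf : AEMeasurable f μ) (hg : Measurable g) (hB : MeasurableSet B)
    (hpos : μ (g ⁻¹' B ∩ s) ≠ 0) :
    cE μ f (g ⁻¹' B ∩ s) = cE μ f s := by
  rw [cE_eq_integral_cond, cE_eq_integral_cond, Set.inter_comm,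
    ← cond_cond_eq_cond_inter hs (hg hB)]
  refine integral_cond_preimage_eq_of_indepFun hfg (hf.mono_ac cond_absolutelyContinuous) hg hB ?_
  exact (cond_pos_of_inter_ne_zero hs (by rwa [Set.inter_comm])).ne'

end SensitivityAnalysis

open SensitivityAnalysis

theorem sensitivity_counterfactual_mean_identity_general
    {Ω 𝒳 𝒮 : Type*} [MeasurableSpace Ω]
    [MeasurableSpace 𝒳] [MeasurableSingletonClass 𝒳]
    [MeasurableSpace 𝒮] [MeasurableSingletonClass 𝒮]
    (μ : Measure Ω) [IsProbabilityMeasure μ]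
    (X : Ω → 𝒳) (M : Ω → 𝒮) (E : Ω → Bool) (Y : Ω → ℝ)
    (hX : Measurable X) (hM : Measurable M) (hE : Measurable E)
    -- counterfactuals: `Yc m = Y_{1,m}`
    (Yc : 𝒮 → Ω → ℝ) (hYc : ∀ m, Integrable (Yc m) μ)
    -- positivity
    (hposE : ∀ (e : Bool) (x : 𝒳), μ (X ⁻¹' {x}) ≠ 0 → μ (E ⁻¹' {e} ∩ X ⁻¹' {x}) ≠ 0)
    -- consistency: Y_{1,m} = Y a.s. on {E=1, M=m}
    (hconsY : ∀ m : 𝒮, ∀ᵐ ω ∂μ, E ω = true → M ω = m → Yc m ω = Y ω)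
    -- exposure ignorability: (Y_{1,m})_{m∈𝒮} ⫫ E | X
    (hign : ∀ x : 𝒳, μ (X ⁻¹' {x}) ≠ 0 →
      IndepFun (fun ω => fun m => Yc m ω) E (μ[|X ⁻¹' {x}]))
    -- selection-bias function: t(e,m,x) = E(Y_{1,m}|E=e,M=m,X=x) − E(Y_{1,m}|E=e,M≠m,X=x)
    (t : Bool → 𝒮 → 𝒳 → ℝ)
    (ht : ∀ (e : Bool) (m : 𝒮) (x : 𝒳),
      t e m x = cE μ (Yc m) (E ⁻¹' {e} ∩ M ⁻¹' {m} ∩ X ⁻¹' {x}) -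
        cE μ (Yc m) (E ⁻¹' {e} ∩ {ω | M ω ≠ m} ∩ X ⁻¹' {x})) :
    ∀ (m : 𝒮) (x : 𝒳), μ (X ⁻¹' {x}) ≠ 0 →
      cE μ (Yc m) (E ⁻¹' {false} ∩ M ⁻¹' {m} ∩ X ⁻¹' {x}) =
        cE μ Y (E ⁻¹' {true} ∩ M ⁻¹' {m} ∩ X ⁻¹' {x}) -
          t true m x * (1 - cP μ (M ⁻¹' {m}) (E ⁻¹' {true} ∩ X ⁻¹' {x})) +
          t false m x * (1 - cP μ (M ⁻¹' {m}) (E ⁻¹' {false} ∩ X ⁻¹' {x})) := by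
  intro m x hx
  have hs : MeasurableSet (X ⁻¹' {x}) := hX (measurableSet_singleton x)
  have hMm : MeasurableSet (M ⁻¹' {m}) := hM (measurableSet_singleton m)
  have hindep : IndepFun (Yc m) E μ[|X ⁻¹' {x}] :=
    (hign x hx).comp (measurable_pi_apply m) measurable_id
  have total_expectation : ∀ e : Bool,
      cE μ (Yc m) (E ⁻¹' {e} ∩ M ⁻¹' {m} ∩ X ⁻¹' {x}) -
        t e m x * (1 - cP μ (M ⁻¹' {m}) (E ⁻¹' {e} ∩ X ⁻¹' {x})) = cE μ (Yc m) (X ⁻¹' {x}) := by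
    intro e
    have hC : E ⁻¹' {e} ∩ {ω | M ω ≠ m} ∩ X ⁻¹' {x} = (E ⁻¹' {e} ∩ X ⁻¹' {x}) \ M ⁻¹' {m} := by
      ext ω
      simp only [Set.mem_inter_iff, Set.mem_sdiff, Set.mem_preimage, Set.mem_singleton_iff,
        Set.mem_ofPred_eq]
      tauto
    rw [ht, hC, Set.inter_right_comm, ← cE_preimage_inter_eq_cE_of_indepFun hs hindep
      (hYc m).aemeasurable hE (measurableSet_singleton e) (hposE e x hx),
      cE_eq_cP_mul_cE_inter_add (A := E ⁻¹' {e} ∩ X ⁻¹' {x}) hMm (hYc m).integrableOn]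
    ring
  have consistency : cE μ Y (E ⁻¹' {true} ∩ M ⁻¹' {m} ∩ X ⁻¹' {x}) =
      cE μ (Yc m) (E ⁻¹' {true} ∩ M ⁻¹' {m} ∩ X ⁻¹' {x}) := by
    refine cE_congr_ae (((hE (measurableSet_singleton true)).inter hMm).inter hs) ?_
    filter_upwards [hconsY m] with ω h hω using (h hω.1.1 hω.1.2).symm
  rw [consistency]
  linarith [total_expectation true, total_expectation false]

/-- sensitivity-analysis identity for the counterfactual conditional mean:
under consistency and exposure ignorability, for all `m, x` with `P(X=x) > 0`,
`E(Y_{1,m}|E=0,M=m,X=x) = E(Y|E=1,M=m,X=x) − t(1,m,x)·(1 − P(M=m|E=1,X=x))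
  + t(0,m,x)·(1 − P(M=m|E=0,X=x))`. -/
theorem sensitivity_counterfactual_mean_identity
    {Ω 𝒳 𝒮 : Type*} [MeasurableSpace Ω] [Fintype 𝒳] [Fintype 𝒮] [Nontrivial 𝒮]
    [MeasurableSpace 𝒳] [MeasurableSingletonClass 𝒳]
    [MeasurableSpace 𝒮] [MeasurableSingletonClass 𝒮]
    (μ : Measure Ω) [IsProbabilityMeasure μ]
    (X : Ω → 𝒳) (M : Ω → 𝒮) (E : Ω → Bool) (Y : Ω → ℝ)
    (hX : Measurable X) (hM : Measurable M) (hE : Measurable E)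
    (hY : Integrable Y μ)
    -- counterfactuals: `Yc m = Y_{1,m}`
    (Yc : 𝒮 → Ω → ℝ) (hYc : ∀ m, Integrable (Yc m) μ)
    -- positivity
    (hposE : ∀ (e : Bool) (x : 𝒳), μ (X ⁻¹' {x}) ≠ 0 → μ (E ⁻¹' {e} ∩ X ⁻¹' {x}) ≠ 0)
    (hposM : ∀ (m : 𝒮) (e : Bool) (x : 𝒳), μ (X ⁻¹' {x}) ≠ 0 →
      μ (M ⁻¹' {m} ∩ E ⁻¹' {e} ∩ X ⁻¹' {x}) ≠ 0)
    -- consistency: Y_{1,m} = Y a.s. on {E=1, M=m}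
    (hconsY : ∀ m : 𝒮, ∀ᵐ ω ∂μ, E ω = true → M ω = m → Yc m ω = Y ω)
    -- exposure ignorability: (Y_{1,m})_{m∈𝒮} ⫫ E | X
    (hign : ∀ x : 𝒳, μ (X ⁻¹' {x}) ≠ 0 →
      IndepFun (fun ω => fun m => Yc m ω) E (μ[|X ⁻¹' {x}]))
    -- selection-bias function: t(e,m,x) = E(Y_{1,m}|E=e,M=m,X=x) − E(Y_{1,m}|E=e,M≠m,X=x)
    (t : Bool → 𝒮 → 𝒳 → ℝ)
    (ht : ∀ (e : Bool) (m : 𝒮) (x : 𝒳),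
      t e m x = cE μ (Yc m) (E ⁻¹' {e} ∩ M ⁻¹' {m} ∩ X ⁻¹' {x}) -
        cE μ (Yc m) (E ⁻¹' {e} ∩ {ω | M ω ≠ m} ∩ X ⁻¹' {x})) :
    ∀ (m : 𝒮) (x : 𝒳), μ (X ⁻¹' {x}) ≠ 0 →
      cE μ (Yc m) (E ⁻¹' {false} ∩ M ⁻¹' {m} ∩ X ⁻¹' {x}) =
        cE μ Y (E ⁻¹' {true} ∩ M ⁻¹' {m} ∩ X ⁻¹' {x}) -
          t true m x * (1 - cP μ (M ⁻¹' {m}) (E ⁻¹' {true} ∩ X ⁻¹' {x})) +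
          t false m x * (1 - cP μ (M ⁻¹' {m}) (E ⁻¹' {false} ∩ X ⁻¹' {x})) :=
  sensitivity_counterfactual_mean_identity_general μ X M E Y hX hM hE Yc hYc hposE hconsY hign t ht
end

section
/- Sensitivity-analysis identification of the mediation functional: under consistency, exposure ignorability and positivity, E[Y_{1,M_0}] = Σ_{m∈𝒮, x∈𝒳, P(X=x)>0} { E(Y|E=1,M=m,X=x) − t(1,m,x)·(1 − P(M=m|E=1,X=x)) + t(0,m,x)·(1 − P(M=m|E=0,X=x)) } · P(M=m|E=0,X=x) · P(X=x), where t(e,m,x) := E(Y_{1,m} | E=e, M=m, X=x) − E(Y_{1,m} | E=e, M≠m, X=x) is the selection-bias function. -/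
open MeasureTheory ProbabilityTheory

/-! Within a stratum `X = x`, splitting `{E = e}` along `{M = m}` shows that
`E(Y_{1,m} | E = e, M = m, x) − t(e,m,x)·(1 − P(M = m | E = e, x)) = E(Y_{1,m} | E = e, x)`,
and exposure ignorability makes the right-hand side independent of `e`. Together with consistency
of `Y` the braced term therefore collapses to `E(Y_{1,m} | E = 0, M = m, x)`. Consistency of `M_0`
and ignorability once more turn the sum over `m` into `E(Y_{1,M_0} | X = x)·P(X = x)`, and summing
over the strata gives `E[Y_{1,M_0}]`. -/

section General

variable {Ω : Type*} [MeasurableSpace Ω] {μ : Measure Ω}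

lemma integral_cond_eq_cE (f : Ω → ℝ) (A : Set Ω) : ∫ ω, f ω ∂μ[|A] = cE μ f A := by
  rw [cE, ProbabilityTheory.cond, integral_smul_measure, smul_eq_mul, ENNReal.toReal_inv,
    inv_mul_eq_div]

lemma setIntegral_eq_zero_of_toReal_measure_eq_zero [IsFiniteMeasure μ] {s : Set Ω}
    (f : Ω → ℝ) (hs : (μ s).toReal = 0) : ∫ ω in s, f ω ∂μ = 0 :=
  setIntegral_measure_zero f ((measureReal_eq_zero_iff).1 hs)

lemma integral_eq_sum_setIntegral_fiber {β : Type*} [Fintype β] [MeasurableSpace β]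
    [MeasurableSingletonClass β] {X : Ω → β} (hX : Measurable X) {f : Ω → ℝ}
    (hf : Integrable f μ) : ∫ ω, f ω ∂μ = ∑ b, ∫ ω in X ⁻¹' {b}, f ω ∂μ := by
  rw [← integral_iUnion_fintype (fun b => hX (measurableSet_singleton b))
    (pairwise_disjoint_fiber X) fun _ => hf.integrableOn, ← Set.preimage_iUnion,
    Set.iUnion_of_singleton, Set.preimage_univ, setIntegral_univ]

lemma integrable_apply_of_measurable_index {ι : Type*} [Fintype ι] [MeasurableSpace ι]
    [MeasurableSingletonClass ι] {I : Ω → ι} (hI : Measurable I) {f : ι → Ω → ℝ}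
    (hf : ∀ i, Integrable (f i) μ) : Integrable (fun ω => f (I ω) ω) μ := by
  classical
  have hsum : (fun ω => f (I ω) ω) = ∑ i, (I ⁻¹' {i}).indicator (f i) := by
    ext ω; simp [Set.indicator_apply]
  rw [hsum]
  exact integrable_finsetSum' _ fun i _ => (hf i).indicator (hI (measurableSet_singleton i))

lemma div_sub_sub_mul_one_sub_div {I K s r : ℝ} (hs : 0 ≤ s) (hr : 0 ≤ r)
    (hI : s = 0 → I = 0) (hK : r = 0 → K = 0) :
    I / s - (I / s - K / r) * (1 - s / (s + r)) = (I + K) / (s + r) := by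
  rcases hs.eq_or_lt with rfl | hs
  · simp [hI rfl]
  rcases hr.eq_or_lt with rfl | hr
  · simp [hK rfl, hs.ne']
  field_simp
  ring

-- No positivity is needed: a null cell has zero integral, so the junk `x / 0 = 0` is harmless.
lemma cE_inter_sub_mul_one_sub_cP [IsFiniteMeasure μ] {f : Ω → ℝ} {B C : Set Ω}
    (hC : MeasurableSet C) (hf : IntegrableOn f B μ) :
    cE μ f (B ∩ C) - (cE μ f (B ∩ C) - cE μ f (B \ C)) * (1 - cP μ C B) = cE μ f B := by
  have hmeas : (μ (B ∩ C)).toReal + (μ (B \ C)).toReal = (μ B).toReal :=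
    measureReal_inter_add_sdiff hC
  rw [cE, cE, cE, cP, Set.inter_comm C B, ← hmeas, ← integral_inter_add_sdiff hC hf]
  exact div_sub_sub_mul_one_sub_div ENNReal.toReal_nonneg ENNReal.toReal_nonneg
    (setIntegral_eq_zero_of_toReal_measure_eq_zero f)
    (setIntegral_eq_zero_of_toReal_measure_eq_zero f)

lemma cE_inter_mul_cP [IsFiniteMeasure μ] (f : Ω → ℝ) (B C : Set Ω) :
    cE μ f (B ∩ C) * cP μ C B = (∫ ω in B ∩ C, f ω ∂μ) / (μ B).toReal := by
  rw [cE, cP, Set.inter_comm C B]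
  rcases eq_or_ne (μ (B ∩ C)).toReal 0 with h | h
  · simp [h, setIntegral_eq_zero_of_toReal_measure_eq_zero f h]
  · field_simp

lemma ProbabilityTheory.IndepFun.setIntegral_preimage [IsProbabilityMeasure μ] {β : Type*}
    [MeasurableSpace β] {f : Ω → ℝ} {E : Ω → β} (h : IndepFun f E μ) (hf : AEStronglyMeasurable f μ)
    (hE : Measurable E) {S : Set β} (hS : MeasurableSet S) :
    ∫ ω in E ⁻¹' S, f ω ∂μ = (μ (E ⁻¹' S)).toReal * ∫ ω, f ω ∂μ := by
  have hind : IndepFun (S.indicator (1 : β → ℝ) ∘ E) f μ :=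
    h.symm.comp (measurable_one.indicator hS) measurable_id
  calc ∫ ω in E ⁻¹' S, f ω ∂μ = ∫ ω, (S.indicator 1 ∘ E) ω * f ω ∂μ := by
        rw [← integral_indicator (hE hS)]
        congr 1 with ω
        by_cases hω : E ω ∈ S <;> simp [hω]
    _ = (μ (E ⁻¹' S)).toReal * ∫ ω, f ω ∂μ := by
        rw [hind.integral_fun_mul_eq_mul_integral
          ((measurable_one.indicator hS).comp hE).aestronglyMeasurable hf, ← measureReal_def,
          ← integral_indicator_one (hE hS)]
        rfl

end General

section Conditioning

variable {Ω β : Type*} [MeasurableSpace Ω] [MeasurableSpace β] {μ : Measure Ω}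
  {f : Ω → ℝ} {E : Ω → β} {S : Set β}

lemma ProbabilityTheory.IndepFun.cE_preimage_eq_integral [IsProbabilityMeasure μ]
    (h : IndepFun f E μ) (hf : AEStronglyMeasurable f μ) (hE : Measurable E) (hS : MeasurableSet S)
    (hpos : μ (E ⁻¹' S) ≠ 0) : cE μ f (E ⁻¹' S) = ∫ ω, f ω ∂μ := by
  rw [cE, h.setIntegral_preimage hf hE hS, mul_div_cancel_left₀ _
    (ENNReal.toReal_ne_zero.2 ⟨hpos, measure_ne_top μ _⟩)]

lemma cE_preimage_inter_eq_cE [IsFiniteMeasure μ] {A : Set Ω} (hA : MeasurableSet A)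
    (h : IndepFun f E μ[|A]) (hf : AEStronglyMeasurable f μ) (hE : Measurable E)
    (hS : MeasurableSet S) (hpos : μ (E ⁻¹' S ∩ A) ≠ 0) :
    cE μ f (E ⁻¹' S ∩ A) = cE μ f A := by
  have hA0 : μ A ≠ 0 := fun h0 => hpos (measure_mono_null Set.inter_subset_right h0)
  have : IsProbabilityMeasure μ[|A] := cond_isProbabilityMeasure hA0
  rw [← integral_cond_eq_cE, ← integral_cond_eq_cE, Set.inter_comm,
    ← cond_cond_eq_cond_inter hA (hE hS), integral_cond_eq_cE]
  refine h.cE_preimage_eq_integral (hf.mono_ac cond_absolutelyContinuous) hE hS ?_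
  rw [cond_apply hA, Set.inter_comm]
  exact mul_ne_zero (ENNReal.inv_ne_zero.2 (measure_ne_top μ A)) hpos

end Conditioning

section Stratum

variable {Ω 𝒮 : Type*} [MeasurableSpace Ω] [Fintype 𝒮] [MeasurableSpace 𝒮]
  [MeasurableSingletonClass 𝒮] {μ : Measure Ω}
  {M : Ω → 𝒮} {E : Ω → Bool} {Y : Ω → ℝ} {Yc : 𝒮 → Ω → ℝ} {M0 : Ω → 𝒮} {A : Set Ω}

lemma setIntegral_counterfactual_eq_sum_fiber (hM : Measurable M) (hE : Measurable E)
    (hA : MeasurableSet A) (hYc : ∀ m, Integrable (Yc m) μ) (hM0 : Measurable M0)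
    (hconsM : ∀ᵐ ω ∂μ, E ω = false → M0 ω = M ω) :
    ∫ ω in E ⁻¹' {false} ∩ A, Yc (M0 ω) ω ∂μ =
      ∑ m, ∫ ω in (E ⁻¹' {false} ∩ A) ∩ M ⁻¹' {m}, Yc m ω ∂μ := by
  have hB : MeasurableSet (E ⁻¹' {false} ∩ A) := (hE (measurableSet_singleton _)).inter hA
  rw [integral_eq_sum_setIntegral_fiber hM (integrable_apply_of_measurable_index hM0 hYc).restrict]
  refine Finset.sum_congr rfl fun m _ => ?_
  rw [Measure.restrict_restrict (hM (measurableSet_singleton m)), Set.inter_comm]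
  refine setIntegral_congr_ae (hB.inter (hM (measurableSet_singleton m))) ?_
  filter_upwards [hconsM] with ω hω ⟨⟨hEω, _⟩, hMω⟩
  rw [hω hEω, Set.mem_preimage.1 hMω]

lemma setIntegral_counterfactual_eq_sum_bias_corrected [IsFiniteMeasure μ] (hM : Measurable M)
    (hE : Measurable E) (hA : MeasurableSet A) (hYc : ∀ m, Integrable (Yc m) μ)
    (hM0 : Measurable M0) (hpos : ∀ e, μ (E ⁻¹' {e} ∩ A) ≠ 0)
    (hconsY : ∀ m, ∀ᵐ ω ∂μ, E ω = true → M ω = m → Yc m ω = Y ω)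
    (hconsM : ∀ᵐ ω ∂μ, E ω = false → M0 ω = M ω)
    (hign : IndepFun (fun ω => ((fun m => Yc m ω), M0 ω)) E μ[|A])
    (t : Bool → 𝒮 → ℝ)
    (ht : ∀ e m, t e m = cE μ (Yc m) (E ⁻¹' {e} ∩ M ⁻¹' {m} ∩ A) -
      cE μ (Yc m) (E ⁻¹' {e} ∩ {ω | M ω ≠ m} ∩ A)) :
    ∫ ω in A, Yc (M0 ω) ω ∂μ =
      ∑ m, (cE μ Y (E ⁻¹' {true} ∩ M ⁻¹' {m} ∩ A) -
          t true m * (1 - cP μ (M ⁻¹' {m}) (E ⁻¹' {true} ∩ A)) +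
          t false m * (1 - cP μ (M ⁻¹' {m}) (E ⁻¹' {false} ∩ A))) *
        cP μ (M ⁻¹' {m}) (E ⁻¹' {false} ∩ A) * (μ A).toReal := by
  set B : Bool → Set Ω := fun e => E ⁻¹' {e} ∩ A with hB
  have hMm (m : 𝒮) : MeasurableSet (M ⁻¹' {m}) := hM (measurableSet_singleton m)
  have hcell (e : Bool) (m : 𝒮) : E ⁻¹' {e} ∩ M ⁻¹' {m} ∩ A = B e ∩ M ⁻¹' {m} :=
    Set.inter_right_comm _ _ _
  have hcellc (e : Bool) (m : 𝒮) : E ⁻¹' {e} ∩ {ω | M ω ≠ m} ∩ A = B e \ M ⁻¹' {m} := by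
    ext ω; simp only [hB, Set.mem_inter_iff, Set.mem_sdiff, Set.mem_preimage]; tauto
  simp only [hcell, hcellc] at ht ⊢
  have hind (m : 𝒮) : IndepFun (Yc m) E μ[|A] :=
    hign.comp ((measurable_pi_apply m).comp measurable_fst) measurable_id
  -- the bias-corrected cell mean is `E(Y_{1,m} | E = e, A)`, which ignorability frees of `e`
  have hbias (e : Bool) (m : 𝒮) :
      cE μ (Yc m) (B e ∩ M ⁻¹' {m}) - t e m * (1 - cP μ (M ⁻¹' {m}) (B e)) = cE μ (Yc m) A := by
    rw [ht, cE_inter_sub_mul_one_sub_cP (hMm m) (hYc m).integrableOn]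
    exact cE_preimage_inter_eq_cE hA (hind m) (hYc m).aestronglyMeasurable hE
      (measurableSet_singleton e) (hpos e)
  have hcons (m : 𝒮) : cE μ Y (B true ∩ M ⁻¹' {m}) = cE μ (Yc m) (B true ∩ M ⁻¹' {m}) := by
    rw [cE, cE, setIntegral_congr_ae (((hE (measurableSet_singleton _)).inter hA).inter (hMm m))]
    filter_upwards [hconsY m] with ω hω ⟨⟨hEω, _⟩, hMω⟩
    exact (hω hEω hMω).symm
  have hg : Integrable (fun ω => Yc (M0 ω) ω) μ := integrable_apply_of_measurable_index hM0 hYc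
  have hind_g : IndepFun (fun ω => Yc (M0 ω) ω) E μ[|A] :=
    hign.comp (φ := fun p : (𝒮 → ℝ) × 𝒮 => p.1 p.2)
      (measurable_from_prod_countable_left fun m => measurable_pi_apply m) measurable_id
  have hA0 : (μ A).toReal ≠ 0 := ENNReal.toReal_ne_zero.2
    ⟨fun h0 => hpos false (measure_mono_null Set.inter_subset_right h0), measure_ne_top μ A⟩
  calc ∫ ω in A, Yc (M0 ω) ω ∂μ = cE μ (fun ω => Yc (M0 ω) ω) A * (μ A).toReal := by
        rw [cE, div_mul_cancel₀ _ hA0]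
    _ = (∫ ω in B false, Yc (M0 ω) ω ∂μ) / (μ (B false)).toReal * (μ A).toReal := by
        rw [← cE, cE_preimage_inter_eq_cE hA hind_g hg.aestronglyMeasurable hE
          (measurableSet_singleton false) (hpos false)]
    _ = ∑ m, cE μ (Yc m) (B false ∩ M ⁻¹' {m}) * cP μ (M ⁻¹' {m}) (B false) * (μ A).toReal := by
        simp only [cE_inter_mul_cP, ← Finset.sum_mul, ← Finset.sum_div]
        rw [setIntegral_counterfactual_eq_sum_fiber hM hE hA hYc hM0 hconsM]
    _ = _ := by
        refine Finset.sum_congr rfl fun m _ => ?_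
        rw [hcons m]
        linear_combination
          (hbias false m - hbias true m) * cP μ (M ⁻¹' {m}) (B false) * (μ A).toReal

end Stratum

open Classical in
theorem sensitivity_mediation_identification_general
    {Ω 𝒳 𝒮 : Type*} [MeasurableSpace Ω] [Fintype 𝒳] [Fintype 𝒮]
    [MeasurableSpace 𝒳] [MeasurableSingletonClass 𝒳]
    [MeasurableSpace 𝒮] [MeasurableSingletonClass 𝒮]
    (μ : Measure Ω) [IsProbabilityMeasure μ]
    (X : Ω → 𝒳) (M : Ω → 𝒮) (E : Ω → Bool) (Y : Ω → ℝ)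
    (hX : Measurable X) (hM : Measurable M) (hE : Measurable E)
    -- counterfactuals: `Yc m = Y_{1,m}` and `M0 = M_0`
    (Yc : 𝒮 → Ω → ℝ) (hYc : ∀ m, Integrable (Yc m) μ)
    (M0 : Ω → 𝒮) (hM0 : Measurable M0)
    -- positivity
    (hposE : ∀ (e : Bool) (x : 𝒳), μ (X ⁻¹' {x}) ≠ 0 → μ (E ⁻¹' {e} ∩ X ⁻¹' {x}) ≠ 0)
    -- consistency
    (hconsY : ∀ m : 𝒮, ∀ᵐ ω ∂μ, E ω = true → M ω = m → Yc m ω = Y ω)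
    (hconsM : ∀ᵐ ω ∂μ, E ω = false → M0 ω = M ω)
    -- exposure ignorability: ((Y_{1,m})_{m∈𝒮}, M_0) ⫫ E | X
    (hign : ∀ x : 𝒳, μ (X ⁻¹' {x}) ≠ 0 →
      IndepFun (fun ω => ((fun m => Yc m ω), M0 ω)) E (μ[|X ⁻¹' {x}]))
    -- selection-bias function: t(e,m,x) = E(Y_{1,m}|E=e,M=m,X=x) − E(Y_{1,m}|E=e,M≠m,X=x)
    (t : Bool → 𝒮 → 𝒳 → ℝ)
    (ht : ∀ (e : Bool) (m : 𝒮) (x : 𝒳),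
      t e m x = cE μ (Yc m) (E ⁻¹' {e} ∩ M ⁻¹' {m} ∩ X ⁻¹' {x}) -
        cE μ (Yc m) (E ⁻¹' {e} ∩ {ω | M ω ≠ m} ∩ X ⁻¹' {x})) :
    ∫ ω, Yc (M0 ω) ω ∂μ =
      ∑ m : 𝒮, ∑ x ∈ Finset.univ.filter (fun x => μ (X ⁻¹' {x}) ≠ 0),
        (cE μ Y (E ⁻¹' {true} ∩ M ⁻¹' {m} ∩ X ⁻¹' {x}) -
            t true m x * (1 - cP μ (M ⁻¹' {m}) (E ⁻¹' {true} ∩ X ⁻¹' {x})) +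
            t false m x * (1 - cP μ (M ⁻¹' {m}) (E ⁻¹' {false} ∩ X ⁻¹' {x}))) *
          cP μ (M ⁻¹' {m}) (E ⁻¹' {false} ∩ X ⁻¹' {x}) *
          (μ (X ⁻¹' {x})).toReal := by
  rw [integral_eq_sum_setIntegral_fiber hX (integrable_apply_of_measurable_index hM0 hYc),
    ← Finset.sum_filter_of_ne (p := fun x => μ (X ⁻¹' {x}) ≠ 0)
      fun x _ hx hx0 => hx (setIntegral_measure_zero (fun ω => Yc (M0 ω) ω) hx0),
    Finset.sum_comm]
  refine Finset.sum_congr rfl fun x hx => ?_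
  have hx0 : μ (X ⁻¹' {x}) ≠ 0 := (Finset.mem_filter.1 hx).2
  exact setIntegral_counterfactual_eq_sum_bias_corrected hM hE
    (hX (measurableSet_singleton x)) hYc hM0
    (fun e => hposE e x hx0) hconsY hconsM (hign x hx0) (fun e m => t e m x)
    fun e m => ht e m x

open Classical in
/-- sensitivity-analysis identification of the mediation functional:
under consistency, exposure ignorability and positivity,
`E[Y_{1,M_0}] = Σ_{m,x:P(X=x)>0} {E(Y|E=1,M=m,X=x) − t(1,m,x)·(1−P(M=m|E=1,X=x))
  + t(0,m,x)·(1−P(M=m|E=0,X=x))}·P(M=m|E=0,X=x)·P(X=x)`. -/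
theorem sensitivity_mediation_identification
    {Ω 𝒳 𝒮 : Type*} [MeasurableSpace Ω] [Fintype 𝒳] [Fintype 𝒮] [Nontrivial 𝒮]
    [MeasurableSpace 𝒳] [MeasurableSingletonClass 𝒳]
    [MeasurableSpace 𝒮] [MeasurableSingletonClass 𝒮]
    (μ : Measure Ω) [IsProbabilityMeasure μ]
    (X : Ω → 𝒳) (M : Ω → 𝒮) (E : Ω → Bool) (Y : Ω → ℝ)
    (hX : Measurable X) (hM : Measurable M) (hE : Measurable E)
    (hY : Integrable Y μ)
    -- counterfactuals: `Yc m = Y_{1,m}` and `M0 = M_0`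
    (Yc : 𝒮 → Ω → ℝ) (hYc : ∀ m, Integrable (Yc m) μ)
    (M0 : Ω → 𝒮) (hM0 : Measurable M0)
    -- positivity
    (hposE : ∀ (e : Bool) (x : 𝒳), μ (X ⁻¹' {x}) ≠ 0 → μ (E ⁻¹' {e} ∩ X ⁻¹' {x}) ≠ 0)
    (hposM : ∀ (m : 𝒮) (e : Bool) (x : 𝒳), μ (X ⁻¹' {x}) ≠ 0 →
      μ (M ⁻¹' {m} ∩ E ⁻¹' {e} ∩ X ⁻¹' {x}) ≠ 0)
    -- consistency
    (hconsY : ∀ m : 𝒮, ∀ᵐ ω ∂μ, E ω = true → M ω = m → Yc m ω = Y ω)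
    (hconsM : ∀ᵐ ω ∂μ, E ω = false → M0 ω = M ω)
    -- exposure ignorability: ((Y_{1,m})_{m∈𝒮}, M_0) ⫫ E | X
    (hign : ∀ x : 𝒳, μ (X ⁻¹' {x}) ≠ 0 →
      IndepFun (fun ω => ((fun m => Yc m ω), M0 ω)) E (μ[|X ⁻¹' {x}]))
    -- selection-bias function: t(e,m,x) = E(Y_{1,m}|E=e,M=m,X=x) − E(Y_{1,m}|E=e,M≠m,X=x)
    (t : Bool → 𝒮 → 𝒳 → ℝ)
    (ht : ∀ (e : Bool) (m : 𝒮) (x : 𝒳),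
      t e m x = cE μ (Yc m) (E ⁻¹' {e} ∩ M ⁻¹' {m} ∩ X ⁻¹' {x}) -
        cE μ (Yc m) (E ⁻¹' {e} ∩ {ω | M ω ≠ m} ∩ X ⁻¹' {x})) :
    ∫ ω, Yc (M0 ω) ω ∂μ =
      ∑ m : 𝒮, ∑ x ∈ Finset.univ.filter (fun x => μ (X ⁻¹' {x}) ≠ 0),
        (cE μ Y (E ⁻¹' {true} ∩ M ⁻¹' {m} ∩ X ⁻¹' {x}) -
            t true m x * (1 - cP μ (M ⁻¹' {m}) (E ⁻¹' {true} ∩ X ⁻¹' {x})) +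
            t false m x * (1 - cP μ (M ⁻¹' {m}) (E ⁻¹' {false} ∩ X ⁻¹' {x}))) *
          cP μ (M ⁻¹' {m}) (E ⁻¹' {false} ∩ X ⁻¹' {x}) *
          (μ (X ⁻¹' {x})).toReal :=
  sensitivity_mediation_identification_general μ X M E Y hX hM hE Yc hYc M0 hM0 hposE hconsY hconsM
    hign t ht
end

section
/- Population double robustness of the sensitivity-analysis estimating functional (population version of Theorem 4): under consistency, exposure ignorability and positivity, with the true selection-bias function t and the true mediator pmf f_M(m|e,x) := P(M=m|E=e,X=x), let b̂ : 𝒮×𝒳 → ℝ and ê : 𝒳 → (0,1) be working models and define η̃(x) := Σ_{m∈𝒮} { b̂(m,x) + t(0,m,x)·(1 − f_M(m|0,x)) − t(1,m,x)·(1 − f_M(m|1,x)) } · f_M(m|0,x). If ê(x) = P(E=1|X=x) for all x with P(X=x) > 0, or b̂(m,x) = E(Y|E=1,M=m,X=x) for all m ∈ 𝒮 and x with P(X=x) > 0, then E[ 1{E=1}·f_M(M|0,X)·(Y − b̂(M,X)) / (ê(X)·f_M(M|1,X)) + η̃(X) ] = E[Y_{1,M_0}]. -/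
/-!
Fix a stratum `X = x` of positive probability. Ignorability lets one condition additionally on
`E = 0`, where `M_0 = M`, so `E[Y_{1,M_0} | X = x]` is the mediation formula
`∑ₘ E(Y_{1,m} | E=0, M=m, X=x) f_M(m|0,x)`. Splitting `E(Y_{1,m} | E=e, X=x)` over `{M = m}` and
`{M ≠ m}`, and using ignorability once more, gives
`E(Y_{1,m} | E=e, M=m, X=x) - t(e,m,x) (1 - f_M(m|e,x)) = E(Y_{1,m} | X=x)` for both values of `e`.
By consistency `b(m,x) := E(Y | E=1, M=m, X=x)` is the `e = 1` conditional mean, so `η̃` built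
from `b̂ = b` is exactly the mediation formula. In general the plug-in term `η̃` errs by
`∑ₘ f_M(m|0,x) (b̂ - b)`, while the weighted residual contributes
`∑ₘ f_M(m|0,x) (P(E=1|X=x) / ê(x)) (b - b̂)`; the two cancel as soon as `b̂ = b` or
`ê(x) = P(E=1|X=x)`.
-/

open MeasureTheory ProbabilityTheory

section ConditionalMean

variable {Ω : Type*} [MeasurableSpace Ω] {μ : Measure Ω}

lemma cE_eq_integral_cond (Y : Ω → ℝ) (S : Set Ω) : cE μ Y S = ∫ ω, Y ω ∂μ[|S] := by
  rw [cE, ProbabilityTheory.cond, integral_smul_measure, ENNReal.toReal_inv, smul_eq_mul,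
    inv_mul_eq_div]

lemma cE_congr_ae {Y Y' : Ω → ℝ} {S : Set Ω} (hS : MeasurableSet S)
    (h : ∀ᵐ ω ∂μ, ω ∈ S → Y ω = Y' ω) : cE μ Y S = cE μ Y' S := by
  rw [cE, cE, setIntegral_congr_ae hS h]

variable [IsFiniteMeasure μ]

lemma cE_mul_toReal_measure (Y : Ω → ℝ) (S : Set Ω) :
    cE μ Y S * (μ S).toReal = ∫ ω in S, Y ω ∂μ := by
  rcases eq_or_ne (μ S) 0 with h | h
  · simp [h, Measure.restrict_eq_zero.mpr h]
  · exact div_mul_cancel₀ _ (ENNReal.toReal_ne_zero.mpr ⟨h, measure_ne_top μ S⟩)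

lemma cP_mul_toReal_measure (A B : Set Ω) :
    cP μ A B * (μ B).toReal = (μ (A ∩ B)).toReal := by
  rcases eq_or_ne (μ B) 0 with h | h
  · simp [h, measure_inter_null_of_null_right A h]
  · exact div_mul_cancel₀ _ (ENNReal.toReal_ne_zero.mpr ⟨h, measure_ne_top μ B⟩)

lemma cP_ne_zero {A B : Set Ω} (h : μ (A ∩ B) ≠ 0) : cP μ A B ≠ 0 :=
  div_ne_zero (ENNReal.toReal_ne_zero.mpr ⟨h, measure_ne_top μ _⟩)
    (ENNReal.toReal_ne_zero.mpr ⟨fun hB => h (measure_inter_null_of_null_right A hB),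
      measure_ne_top μ _⟩)

lemma cE_inter_mul_cP_add_cE_sdiff_mul {Y : Ω → ℝ} {A B : Set Ω} (hA : MeasurableSet A)
    (hB : μ B ≠ 0) (hY : IntegrableOn Y B μ) :
    cE μ Y (B ∩ A) * cP μ A B + cE μ Y (B \ A) * (1 - cP μ A B) = cE μ Y B := by
  have hB' : (μ B).toReal ≠ 0 := ENNReal.toReal_ne_zero.mpr ⟨hB, measure_ne_top μ B⟩
  have hsplit := measureReal_inter_add_sdiff (μ := μ) (s := B) hA
  simp only [measureReal_def] at hsplit
  have hcompl : 1 - cP μ A B = (μ (B \ A)).toReal / (μ B).toReal := by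
    rw [cP, Set.inter_comm, eq_div_iff hB', sub_mul, div_mul_cancel₀ _ hB']
    linarith
  rw [hcompl, cP, Set.inter_comm A, ← mul_div_assoc, ← mul_div_assoc, cE_mul_toReal_measure,
    cE_mul_toReal_measure, ← add_div, integral_inter_add_sdiff hA hY, cE]

end ConditionalMean

lemma cE_inter_preimage_eq_of_indepFun {Ω β : Type*} [MeasurableSpace Ω] [MeasurableSpace β]
    {μ : Measure Ω} [IsFiniteMeasure μ] {U : Ω → ℝ} {W : Ω → β} {A : Set Ω} {s : Set β}
    (hA : MeasurableSet A) (hW : Measurable W) (hs : MeasurableSet s)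
    (hU : AEStronglyMeasurable U μ) (hind : IndepFun U W μ[|A]) (hpos : μ (W ⁻¹' s ∩ A) ≠ 0) :
    cE μ U (W ⁻¹' s ∩ A) = cE μ U A := by
  set ν := μ[|A]
  have hB : MeasurableSet (W ⁻¹' s) := hW hs
  have hνB : ν (W ⁻¹' s) ≠ 0 := by
    rw [cond_apply hA, Set.inter_comm]
    exact mul_ne_zero (ENNReal.inv_ne_zero.mpr (measure_ne_top μ A)) hpos
  have hfactor : ∫ ω in W ⁻¹' s, U ω ∂ν = (ν (W ⁻¹' s)).toReal * ∫ ω, U ω ∂ν := by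
    have hind' : IndepFun ((W ⁻¹' s).indicator (1 : Ω → ℝ)) U ν :=
      hind.symm.comp (measurable_one.indicator hs) measurable_id
    rw [← integral_indicator hB, ← measureReal_def, ← integral_indicator_one hB,
      ← hind'.integral_fun_mul_eq_mul_integral
        (measurable_one.indicator hB).aestronglyMeasurable (hU.mono_ac cond_absolutelyContinuous)]
    refine integral_congr_ae (ae_of_all _ fun ω => ?_)
    by_cases h : ω ∈ W ⁻¹' s <;> simp [h]
  rw [cE_eq_integral_cond, cE_eq_integral_cond, Set.inter_comm, ← cond_cond_eq_cond_inter hA hB,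
    ← cE_eq_integral_cond, cE, hfactor,
    mul_div_cancel_left₀ _ (ENNReal.toReal_ne_zero.mpr ⟨hνB, measure_ne_top ν _⟩)]

lemma select_eq_sum_indicator {Ω ι : Type*} [Fintype ι] (T : Ω → ι) (g : ι → Ω → ℝ) :
    (fun ω => g (T ω) ω) = fun ω => ∑ i, (T ⁻¹' {i}).indicator (g i) ω := by
  classical
  ext ω
  simp [Set.indicator_apply]

section FiniteIndex

variable {Ω ι : Type*} [MeasurableSpace Ω] {μ : Measure Ω} [Fintype ι] [MeasurableSpace ι]
  [MeasurableSingletonClass ι] {T : Ω → ι} {g : ι → Ω → ℝ}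

lemma integrable_select (hT : Measurable T) (hg : ∀ i, Integrable (g i) μ) :
    Integrable (fun ω => g (T ω) ω) μ := by
  rw [select_eq_sum_indicator]
  exact integrable_finsetSum _ fun i _ => (hg i).indicator (hT (measurableSet_singleton i))

lemma integral_select_eq_sum (hT : Measurable T) (hg : ∀ i, Integrable (g i) μ) :
    ∫ ω, g (T ω) ω ∂μ = ∑ i, ∫ ω in T ⁻¹' {i}, g i ω ∂μ := by
  rw [select_eq_sum_indicator, integral_finsetSum _ fun i _ =>
    (hg i).indicator (hT (measurableSet_singleton i))]
  simp_rw [integral_indicator (hT (measurableSet_singleton _))]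

lemma cE_select_eq_sum [IsFiniteMeasure μ] (hT : Measurable T) (hg : ∀ i, Integrable (g i) μ)
    (S : Set Ω) :
    cE μ (fun ω => g (T ω) ω) S = ∑ i, cE μ (g i) (T ⁻¹' {i} ∩ S) * cP μ (T ⁻¹' {i}) S := by
  simp only [cP, ← mul_div_assoc, cE_mul_toReal_measure, ← Finset.sum_div]
  rw [cE, integral_select_eq_sum hT fun i => (hg i).restrict]
  simp_rw [Measure.restrict_restrict (hT (measurableSet_singleton _))]

end FiniteIndex

lemma ipw_add_plugin_eq_of_or {f₀ f₁ π e b b' c τ₀ τ₁ : ℝ} (hf₁ : f₁ ≠ 0)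
    (hmean : c - τ₀ * (1 - f₀) = b - τ₁ * (1 - f₁)) (hdr : (e = π ∧ π ≠ 0) ∨ b' = b) :
    f₀ / (e * f₁) * (b - b') * (f₁ * π) + (b' + τ₀ * (1 - f₀) - τ₁ * (1 - f₁)) * f₀ = c * f₀ := by
  have hw : f₀ / (e * f₁) * (f₁ * π) = f₀ * (π / e) := by field_simp
  have hcorr : π / e * (b - b') + b' = b := by
    rcases hdr with ⟨rfl, hπ⟩ | rfl
    · rw [div_self hπ, one_mul, sub_add_cancel]
    · rw [sub_self, mul_zero, zero_add]
  linear_combination (b - b') * hw + f₀ * hcorr - f₀ * hmean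

section Strata

variable {Ω 𝒳 𝒮 : Type*} [MeasurableSpace Ω] [MeasurableSpace 𝒳] [MeasurableSingletonClass 𝒳]
  [MeasurableSpace 𝒮] [MeasurableSingletonClass 𝒮] {μ : Measure Ω} [IsFiniteMeasure μ]
  {X : Ω → 𝒳} {M : Ω → 𝒮} {E : Ω → Bool}

lemma cE_stratum_sub_selectionBias_mul (hX : Measurable X) (hM : Measurable M)
    (hE : Measurable E) {Z : Ω → ℝ} (hZ : Integrable Z μ) {x : 𝒳}
    (hind : IndepFun Z E μ[|X ⁻¹' {x}]) {e : Bool} (hq : μ (E ⁻¹' {e} ∩ X ⁻¹' {x}) ≠ 0)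
    {m : 𝒮} {τ : ℝ} (hτ : τ = cE μ Z (E ⁻¹' {e} ∩ M ⁻¹' {m} ∩ X ⁻¹' {x}) -
      cE μ Z (E ⁻¹' {e} ∩ {ω | M ω ≠ m} ∩ X ⁻¹' {x})) :
    cE μ Z (E ⁻¹' {e} ∩ M ⁻¹' {m} ∩ X ⁻¹' {x}) -
        τ * (1 - cP μ (M ⁻¹' {m}) (E ⁻¹' {e} ∩ X ⁻¹' {x})) = cE μ Z (X ⁻¹' {x}) := by
  have hsplit := cE_inter_mul_cP_add_cE_sdiff_mul (hM (measurableSet_singleton m)) hq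
    hZ.integrableOn
  have hdiff : (E ⁻¹' {e} ∩ X ⁻¹' {x}) \ M ⁻¹' {m} =
      E ⁻¹' {e} ∩ {ω | M ω ≠ m} ∩ X ⁻¹' {x} := by
    ext ω
    simp only [Set.mem_sdiff, Set.mem_inter_iff, Set.mem_preimage, Set.mem_singleton_iff,
      Set.mem_ofPred_eq]
    tauto
  rw [Set.inter_right_comm, hdiff, cE_inter_preimage_eq_of_indepFun
    (hX (measurableSet_singleton x)) hE (measurableSet_singleton e) hZ.aestronglyMeasurable
    hind hq] at hsplit
  rw [hτ, ← hsplit]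
  ring

lemma setIntegral_nested_counterfactual_eq_sum [Fintype 𝒮] (hX : Measurable X)
    (hM : Measurable M) (hE : Measurable E) {Yc : 𝒮 → Ω → ℝ} (hYc : ∀ m, Integrable (Yc m) μ)
    {M₀ : Ω → 𝒮} (hM₀ : Measurable M₀) {e : Bool} (hcons : ∀ᵐ ω ∂μ, E ω = e → M₀ ω = M ω)
    {x : 𝒳} (hind : IndepFun (fun ω => ((fun m => Yc m ω), M₀ ω)) E μ[|X ⁻¹' {x}])
    (hq : μ (E ⁻¹' {e} ∩ X ⁻¹' {x}) ≠ 0) :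
    ∫ ω in X ⁻¹' {x}, Yc (M₀ ω) ω ∂μ = (μ (X ⁻¹' {x})).toReal *
      ∑ m, cE μ (Yc m) (E ⁻¹' {e} ∩ M ⁻¹' {m} ∩ X ⁻¹' {x}) *
        cP μ (M ⁻¹' {m}) (E ⁻¹' {e} ∩ X ⁻¹' {x}) := by
  have heval : Measurable fun p : (𝒮 → ℝ) × 𝒮 => p.1 p.2 :=
    measurable_from_prod_countable_left fun m => measurable_pi_apply m
  have hQ : MeasurableSet (E ⁻¹' {e} ∩ X ⁻¹' {x}) :=
    (hE (measurableSet_singleton e)).inter (hX (measurableSet_singleton x))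
  rw [← cE_mul_toReal_measure, mul_comm, ← cE_inter_preimage_eq_of_indepFun
    (hX (measurableSet_singleton x)) hE (measurableSet_singleton e)
    (integrable_select hM₀ hYc).aestronglyMeasurable (hind.comp heval measurable_id) hq,
    cE_congr_ae hQ (hcons.mono fun ω h hω => by rw [h hω.1]), cE_select_eq_sum hM hYc]
  refine congrArg _ (Finset.sum_congr rfl fun m _ => ?_)
  rw [Set.inter_left_comm, ← Set.inter_assoc]

lemma integral_ipw_add_eq_sum [Fintype 𝒳] [Fintype 𝒮] (hX : Measurable X) (hM : Measurable M)
    (hE : Measurable E) {Y : Ω → ℝ} (hY : Integrable Y μ) (u v b : 𝒮 → 𝒳 → ℝ) (h : 𝒳 → ℝ) :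
    ∫ ω, ((if E ω then (1:ℝ) else 0) * u (M ω) (X ω) * (Y ω - b (M ω) (X ω)) / v (M ω) (X ω) +
      h (X ω)) ∂μ =
    ∑ x, (μ (X ⁻¹' {x})).toReal *
      (∑ m, u m x / v m x * (cE μ Y (E ⁻¹' {true} ∩ M ⁻¹' {m} ∩ X ⁻¹' {x}) - b m x) *
        (cP μ (M ⁻¹' {m}) (E ⁻¹' {true} ∩ X ⁻¹' {x}) * cP μ (E ⁻¹' {true}) (X ⁻¹' {x})) + h x) := by
  have hT : Measurable fun ω => (X ω, M ω, E ω) := hX.prodMk (hM.prodMk hE)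
  have hipw : ∀ i : 𝒳 × 𝒮 × Bool, Integrable
      (fun ω => (if i.2.2 then (1:ℝ) else 0) * u i.2.1 i.1 * (Y ω - b i.2.1 i.1) / v i.2.1 i.1) μ :=
    fun i => ((hY.sub (integrable_const _)).const_mul _).div_const _
  have hh : ∀ x, Integrable (fun _ : Ω => h x) μ := fun x => integrable_const (h x)
  rw [integral_add (integrable_select hT hipw) (integrable_select hX hh),
    integral_select_eq_sum hT hipw, integral_select_eq_sum hX hh]
  simp only [Fintype.sum_prod_type, Fintype.sum_bool, if_true, Bool.false_eq_true, if_false,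
    zero_mul, zero_div, integral_zero, add_zero, setIntegral_const, smul_eq_mul, measureReal_def,
    one_mul, mul_add, Finset.mul_sum, ← Finset.sum_add_distrib]
  refine Finset.sum_congr rfl fun x _ => ?_
  congr 1
  refine Finset.sum_congr rfl fun m _ => ?_
  have hC : (fun ω => (X ω, M ω, E ω)) ⁻¹' {(x, m, true)} =
      E ⁻¹' {true} ∩ M ⁻¹' {m} ∩ X ⁻¹' {x} := by
    ext ω
    simp only [Set.mem_preimage, Set.mem_singleton_iff, Set.mem_inter_iff, Prod.mk.injEq]
    tauto
  have hμC : (μ (E ⁻¹' {true} ∩ M ⁻¹' {m} ∩ X ⁻¹' {x})).toReal =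
      cP μ (M ⁻¹' {m}) (E ⁻¹' {true} ∩ X ⁻¹' {x}) * cP μ (E ⁻¹' {true}) (X ⁻¹' {x}) *
        (μ (X ⁻¹' {x})).toReal := by
    rw [mul_assoc, cP_mul_toReal_measure, cP_mul_toReal_measure, Set.inter_left_comm,
      ← Set.inter_assoc]
  rw [hC, integral_div, integral_const_mul, integral_sub hY.integrableOn (integrable_const _),
    setIntegral_const, smul_eq_mul, measureReal_def, ← cE_mul_toReal_measure, hμC]
  ring

end Strata

theorem sensitivity_double_robustness_general
    {Ω 𝒳 𝒮 : Type*} [MeasurableSpace Ω] [Fintype 𝒳] [Fintype 𝒮]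
    [MeasurableSpace 𝒳] [MeasurableSingletonClass 𝒳]
    [MeasurableSpace 𝒮] [MeasurableSingletonClass 𝒮]
    (μ : Measure Ω) [IsProbabilityMeasure μ]
    (X : Ω → 𝒳) (M : Ω → 𝒮) (E : Ω → Bool) (Y : Ω → ℝ)
    (hX : Measurable X) (hM : Measurable M) (hE : Measurable E)
    (hY : Integrable Y μ)
    -- counterfactuals: `Yc m = Y_{1,m}` and `M0 = M_0`
    (Yc : 𝒮 → Ω → ℝ) (hYc : ∀ m, Integrable (Yc m) μ)
    (M0 : Ω → 𝒮) (hM0 : Measurable M0)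
    -- positivity
    (hposE : ∀ (e : Bool) (x : 𝒳), μ (X ⁻¹' {x}) ≠ 0 → μ (E ⁻¹' {e} ∩ X ⁻¹' {x}) ≠ 0)
    (hposM : ∀ (m : 𝒮) (e : Bool) (x : 𝒳), μ (X ⁻¹' {x}) ≠ 0 →
      μ (M ⁻¹' {m} ∩ E ⁻¹' {e} ∩ X ⁻¹' {x}) ≠ 0)
    -- consistency
    (hconsY : ∀ m : 𝒮, ∀ᵐ ω ∂μ, E ω = true → M ω = m → Yc m ω = Y ω)
    (hconsM : ∀ᵐ ω ∂μ, E ω = false → M0 ω = M ω)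
    -- exposure ignorability: ((Y_{1,m})_{m∈𝒮}, M_0) ⫫ E | X
    (hign : ∀ x : 𝒳, μ (X ⁻¹' {x}) ≠ 0 →
      IndepFun (fun ω => ((fun m => Yc m ω), M0 ω)) E (μ[|X ⁻¹' {x}]))
    -- true selection-bias function
    (t : Bool → 𝒮 → 𝒳 → ℝ)
    (ht : ∀ (e : Bool) (m : 𝒮) (x : 𝒳),
      t e m x = cE μ (Yc m) (E ⁻¹' {e} ∩ M ⁻¹' {m} ∩ X ⁻¹' {x}) -
        cE μ (Yc m) (E ⁻¹' {e} ∩ {ω | M ω ≠ m} ∩ X ⁻¹' {x}))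
    -- working models
    (bhat : 𝒮 → 𝒳 → ℝ) (ehat : 𝒳 → ℝ)
    -- η̃(x) built from b̂, t and the true mediator pmf
    (etatilde : 𝒳 → ℝ)
    (hetatilde : ∀ x, etatilde x =
      ∑ m : 𝒮,
        (bhat m x +
            t false m x * (1 - cP μ (M ⁻¹' {m}) (E ⁻¹' {false} ∩ X ⁻¹' {x})) -
            t true m x * (1 - cP μ (M ⁻¹' {m}) (E ⁻¹' {true} ∩ X ⁻¹' {x}))) *
          cP μ (M ⁻¹' {m}) (E ⁻¹' {false} ∩ X ⁻¹' {x}))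
    -- at least one working model is correct
    (hdr : (∀ x : 𝒳, μ (X ⁻¹' {x}) ≠ 0 → ehat x = cP μ (E ⁻¹' {true}) (X ⁻¹' {x})) ∨
      (∀ (m : 𝒮) (x : 𝒳), μ (X ⁻¹' {x}) ≠ 0 →
        bhat m x = cE μ Y (E ⁻¹' {true} ∩ M ⁻¹' {m} ∩ X ⁻¹' {x}))) :
    ∫ ω,
        ((if E ω then (1:ℝ) else 0) *
            cP μ (M ⁻¹' {M ω}) (E ⁻¹' {false} ∩ X ⁻¹' {X ω}) *
            (Y ω - bhat (M ω) (X ω)) /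
            (ehat (X ω) * cP μ (M ⁻¹' {M ω}) (E ⁻¹' {true} ∩ X ⁻¹' {X ω})) +
          etatilde (X ω)) ∂μ = ∫ ω, Yc (M0 ω) ω ∂μ := by
  rw [integral_ipw_add_eq_sum hX hM hE hY
      (fun m x => cP μ (M ⁻¹' {m}) (E ⁻¹' {false} ∩ X ⁻¹' {x}))
      (fun m x => ehat x * cP μ (M ⁻¹' {m}) (E ⁻¹' {true} ∩ X ⁻¹' {x})) bhat etatilde,
    integral_select_eq_sum hX fun _ => integrable_select hM0 hYc]
  refine Finset.sum_congr rfl fun x _ => ?_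
  rcases eq_or_ne (μ (X ⁻¹' {x})) 0 with hx | hx
  · simp [hx, Measure.restrict_eq_zero.mpr hx]
  rw [setIntegral_nested_counterfactual_eq_sum hX hM hE hYc hM0 hconsM (hign x hx)
    (hposE false x hx), hetatilde, ← Finset.sum_add_distrib]
  refine congrArg _ (Finset.sum_congr rfl fun m _ => ?_)
  have hYm : IndepFun (Yc m) E μ[|X ⁻¹' {x}] :=
    (hign x hx).comp ((measurable_pi_apply m).comp measurable_fst) measurable_id
  have hb : cE μ Y (E ⁻¹' {true} ∩ M ⁻¹' {m} ∩ X ⁻¹' {x}) =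
      cE μ (Yc m) (E ⁻¹' {true} ∩ M ⁻¹' {m} ∩ X ⁻¹' {x}) :=
    cE_congr_ae (((hE (measurableSet_singleton _)).inter (hM (measurableSet_singleton _))).inter
      (hX (measurableSet_singleton _))) ((hconsY m).mono fun ω h hω => (h hω.1.1 hω.1.2).symm)
  refine ipw_add_plugin_eq_of_or (cP_ne_zero (by rw [← Set.inter_assoc]; exact hposM m true x hx))
    ?_ (hdr.imp (fun h => ⟨h x hx, cP_ne_zero (hposE true x hx)⟩) (fun h => h m x hx))
  rw [hb, cE_stratum_sub_selectionBias_mul hX hM hE (hYc m) hYm (hposE false x hx) (ht false m x),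
    cE_stratum_sub_selectionBias_mul hX hM hE (hYc m) hYm (hposE true x hx) (ht true m x)]

/-- population double robustness of the sensitivity-analysis estimating
functional: with the true selection-bias function `t` and the true mediator pmf, if the
working exposure model `ê` or the working outcome regression `b̂` is correct, then
`E[1{E=1}·f_M(M|0,X)·(Y − b̂(M,X))/(ê(X)·f_M(M|1,X)) + η̃(X)] = E[Y_{1,M_0}]`. -/
theorem sensitivity_double_robustness
    {Ω 𝒳 𝒮 : Type*} [MeasurableSpace Ω] [Fintype 𝒳] [Fintype 𝒮] [Nontrivial 𝒮]
    [MeasurableSpace 𝒳] [MeasurableSingletonClass 𝒳]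
    [MeasurableSpace 𝒮] [MeasurableSingletonClass 𝒮]
    (μ : Measure Ω) [IsProbabilityMeasure μ]
    (X : Ω → 𝒳) (M : Ω → 𝒮) (E : Ω → Bool) (Y : Ω → ℝ)
    (hX : Measurable X) (hM : Measurable M) (hE : Measurable E)
    (hY : Integrable Y μ)
    -- counterfactuals: `Yc m = Y_{1,m}` and `M0 = M_0`
    (Yc : 𝒮 → Ω → ℝ) (hYc : ∀ m, Integrable (Yc m) μ)
    (M0 : Ω → 𝒮) (hM0 : Measurable M0)
    -- positivity
    (hposE : ∀ (e : Bool) (x : 𝒳), μ (X ⁻¹' {x}) ≠ 0 → μ (E ⁻¹' {e} ∩ X ⁻¹' {x}) ≠ 0)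
    (hposM : ∀ (m : 𝒮) (e : Bool) (x : 𝒳), μ (X ⁻¹' {x}) ≠ 0 →
      μ (M ⁻¹' {m} ∩ E ⁻¹' {e} ∩ X ⁻¹' {x}) ≠ 0)
    -- consistency
    (hconsY : ∀ m : 𝒮, ∀ᵐ ω ∂μ, E ω = true → M ω = m → Yc m ω = Y ω)
    (hconsM : ∀ᵐ ω ∂μ, E ω = false → M0 ω = M ω)
    -- exposure ignorability: ((Y_{1,m})_{m∈𝒮}, M_0) ⫫ E | X
    (hign : ∀ x : 𝒳, μ (X ⁻¹' {x}) ≠ 0 →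
      IndepFun (fun ω => ((fun m => Yc m ω), M0 ω)) E (μ[|X ⁻¹' {x}]))
    -- true selection-bias function
    (t : Bool → 𝒮 → 𝒳 → ℝ)
    (ht : ∀ (e : Bool) (m : 𝒮) (x : 𝒳),
      t e m x = cE μ (Yc m) (E ⁻¹' {e} ∩ M ⁻¹' {m} ∩ X ⁻¹' {x}) -
        cE μ (Yc m) (E ⁻¹' {e} ∩ {ω | M ω ≠ m} ∩ X ⁻¹' {x}))
    -- working models
    (bhat : 𝒮 → 𝒳 → ℝ) (ehat : 𝒳 → ℝ) (hehat01 : ∀ x, ehat x ∈ Set.Ioo (0:ℝ) 1)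
    -- η̃(x) built from b̂, t and the true mediator pmf
    (etatilde : 𝒳 → ℝ)
    (hetatilde : ∀ x, etatilde x =
      ∑ m : 𝒮,
        (bhat m x +
            t false m x * (1 - cP μ (M ⁻¹' {m}) (E ⁻¹' {false} ∩ X ⁻¹' {x})) -
            t true m x * (1 - cP μ (M ⁻¹' {m}) (E ⁻¹' {true} ∩ X ⁻¹' {x}))) *
          cP μ (M ⁻¹' {m}) (E ⁻¹' {false} ∩ X ⁻¹' {x}))
    -- at least one working model is correct
    (hdr : (∀ x : 𝒳, μ (X ⁻¹' {x}) ≠ 0 → ehat x = cP μ (E ⁻¹' {true}) (X ⁻¹' {x})) ∨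
      (∀ (m : 𝒮) (x : 𝒳), μ (X ⁻¹' {x}) ≠ 0 →
        bhat m x = cE μ Y (E ⁻¹' {true} ∩ M ⁻¹' {m} ∩ X ⁻¹' {x}))) :
    ∫ ω,
        ((if E ω then (1:ℝ) else 0) *
            cP μ (M ⁻¹' {M ω}) (E ⁻¹' {false} ∩ X ⁻¹' {X ω}) *
            (Y ω - bhat (M ω) (X ω)) /
            (ehat (X ω) * cP μ (M ⁻¹' {M ω}) (E ⁻¹' {true} ∩ X ⁻¹' {X ω})) +
          etatilde (X ω)) ∂μ = ∫ ω, Yc (M0 ω) ω ∂μ :=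
  sensitivity_double_robustness_general μ X M E Y hX hM hE hY Yc hYc M0 hM0 hposE hposM hconsY
    hconsM hign t ht bhat ehat etatilde hetatilde hdr
end
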